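/- Let n ≥ 3 be odd and let [L_B | 1] be the n×n matrix associated to the cycle C_n. Over Z/nZ, the left kernel {x ∈ (Z/nZ)^n : x·[L_B | 1] ≡ 0 mod n} equals the span of the all-ones vector (1,1,...,1) and the vector (0,1,2,...,n-1). -/

import Mathlib

/-!
The columns `j < n - 1` of `[L_B | 1]` pair `x` with the partial sums `∑_{k ≤ j} (x L)_k`, so `x`
lies in the left kernel iff `(x L)_k = 0` for `k < n - 1` and `∑ x_i = 0`. Since `L` is the
Laplacian of the cycle, `(x L)_k = 2 x_k - x_{k-1} - x_{k+1}`, and the first condition makes `x` an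
arithmetic progression `x_i = x_0 + i (x_0 - x_{n-1})` along `0, …, n - 1`. Conversely, `1` and
`i ↦ i` have vanishing cyclic second differences mod `n`, and their coordinate sums `n` and
`n (n - 1) / 2` vanish mod `n` because `n` is odd.
-/

open Finset Matrix SimpleGraph

theorem forall_sum_Iic_eq_zero_iff {α R : Type*} [LinearOrder α] [LocallyFiniteOrderBot α]
    [WellFoundedLT α] [AddCommMonoid R] {y : α → R} {s : Set α} (hs : IsLowerSet s) :
    (∀ j ∈ s, ∑ i ∈ Iic j, y i = 0) ↔ ∀ j ∈ s, y j = 0 := by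
  refine ⟨fun h j => ?_, fun h j hj => sum_eq_zero fun i hi => h i (hs (mem_Iic.1 hi) hj)⟩
  induction j using WellFoundedLT.induction with
  | _ j ih =>
    intro hj
    have hIio : ∑ i ∈ Iio j, y i = 0 :=
      sum_eq_zero fun i hi => ih i (mem_Iio.1 hi) (hs (mem_Iio.1 hi).le hj)
    simpa [← Iio_insert, hIio] using h j hj

theorem vecMul_apply_eq_sum_val_le {R : Type*} [NonAssocSemiring R] {m k : ℕ}
    {A : Matrix (Fin m) (Fin k) R} (hA : ∀ i j, A i j = if (i : ℕ) ≤ (j : ℕ) then 1 else 0)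
    (y : Fin m → R) (j : Fin k) :
    (y ᵥ* A) j = ∑ i ∈ univ.filter (fun i : Fin m => (i : ℕ) ≤ j), y i := by
  simp [vecMul, dotProduct, hA, sum_filter]

theorem vecMul_eq_zero_iff_of_mul_append_one {R : Type*} [CommSemiring R] {n : ℕ} [NeZero n]
    {L : Matrix (Fin n) (Fin n) R} {A : Matrix (Fin n) (Fin (n - 1)) R}
    {M : Matrix (Fin n) (Fin n) R}
    (hA : ∀ i j, A i j = if (i : ℕ) ≤ (j : ℕ) then 1 else 0)
    (hM : ∀ i (j : Fin n), M i j = if h : (j : ℕ) < n - 1 then (L * A) i ⟨j, h⟩ else 1)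
    (x : Fin n → R) :
    x ᵥ* M = 0 ↔ (∀ k : Fin n, (k : ℕ) < n - 1 → (x ᵥ* L) k = 0) ∧ ∑ i, x i = 0 := by
  have hcol : ∀ j : Fin n, (x ᵥ* M) j =
      if (j : ℕ) < n - 1 then ∑ i ∈ Iic j, (x ᵥ* L) i else ∑ i, x i := by
    intro j
    split_ifs with hj
    · rw [← filter_ge_eq_Iic]
      convert vecMul_apply_eq_sum_val_le hA (x ᵥ* L) ⟨j, hj⟩ using 1
      · rw [vecMul_vecMul]
        simp only [vecMul, dotProduct, hM, dif_pos hj]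
      · rfl
    · simp [vecMul, dotProduct, hM, hj]
  have hs : IsLowerSet {k : Fin n | (k : ℕ) < n - 1} := fun _ _ hle hlt =>
    (Fin.le_def.1 hle).trans_lt hlt
  simp only [funext_iff, Pi.zero_apply, hcol]
  constructor
  · intro h
    refine ⟨(forall_sum_Iic_eq_zero_iff hs).1 fun j (hj : (j : ℕ) < n - 1) => ?_, ?_⟩
    · simpa [hj] using h j
    · simpa using h ⟨n - 1, Nat.sub_one_lt (NeZero.ne n)⟩
  · rintro ⟨hL, hsum⟩ j
    split_ifs with hj
    · exact (forall_sum_Iic_eq_zero_iff hs).2 hL j hj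
    · exact hsum

theorem eq_add_mul_of_second_difference_eq_zero {R : Type*} [CommRing R] {f : ℕ → R} {N : ℕ}
    (hf : ∀ j, j + 2 < N → f (j + 2) - 2 * f (j + 1) + f j = 0) :
    ∀ j < N, f j = f 0 + j * (f 1 - f 0) := by
  intro j
  induction j using Nat.twoStepInduction with
  | zero => simp
  | one => simp
  | more j ih₀ ih₁ =>
    intro hj
    have h := hf j hj
    rw [ih₁ (by omega), ih₀ (by omega)] at h
    push_cast at h ⊢
    linear_combination h

theorem sum_natCast_val_fin_eq_zero_of_odd {n : ℕ} (hn : Odd n) :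
    ∑ i : Fin n, ((i : ℕ) : ZMod n) = 0 := by
  obtain ⟨t, rfl⟩ := hn
  have hgauss : ∑ i ∈ range (2 * t + 1), i = (2 * t + 1) * t := by
    have := sum_range_id_mul_two (2 * t + 1)
    rw [show 2 * t + 1 - 1 = 2 * t by omega] at this
    linarith
  rw [← Nat.cast_sum, Fin.sum_univ_eq_sum_range (fun i => i), hgauss, Nat.cast_mul,
    ZMod.natCast_self, zero_mul]

theorem vecMul_lapMatrix {V R : Type*} [Fintype V] [DecidableEq V] [CommRing R]
    (G : SimpleGraph V) [DecidableRel G.Adj] (x : V → R) :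
    x ᵥ* G.lapMatrix R = G.lapMatrix R *ᵥ x := by
  rw [← vecMul_transpose, (isSymm_lapMatrix R G).eq]

section CycleGraph

variable {R : Type*} {m : ℕ}

theorem lapMatrix_cycleGraph_apply [AddGroupWithOne R] (a b : Fin (m + 3)) :
    (cycleGraph (m + 3)).lapMatrix R a b =
      if a = b then 2 else if b = a + 1 ∨ a = b + 1 then -1 else 0 := by
  have hadj : (cycleGraph (m + 3)).Adj a b ↔ b = a + 1 ∨ a = b + 1 := by
    rw [cycleGraph_adj, sub_eq_iff_eq_add, sub_eq_iff_eq_add, or_comm, add_comm b, add_comm a]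
  by_cases hab : a = b
  · subst hab
    simp [lapMatrix, degMatrix, cycleGraph_degree_three_le]
  · rw [lapMatrix, degMatrix, Matrix.sub_apply, diagonal_apply_ne _ hab, adjMatrix_apply,
      zero_sub, if_neg hab]
    simp only [hadj]
    split_ifs <;> simp

variable [CommRing R]

theorem vecMul_lapMatrix_cycleGraph_apply (x : Fin (m + 3) → R) (k : Fin (m + 3)) :
    (x ᵥ* (cycleGraph (m + 3)).lapMatrix R) k = 2 * x k - x (k - 1) - x (k + 1) := by
  have hne : k - 1 ≠ k + 1 := by
    rw [Ne, sub_eq_iff_eq_add, add_assoc, left_eq_add, Fin.ext_iff]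
    simp [Fin.val_add, Nat.mod_eq_of_lt (by omega : 2 < m + 3)]
  rw [vecMul_lapMatrix, lapMatrix_mulVec_apply, cycleGraph_degree_three_le,
    cycleGraph_neighborFinset, sum_pair hne]
  push_cast
  ring

open Fin.NatCast in
theorem eq_add_mul_of_vecMul_lapMatrix_cycleGraph_eq_zero {x : Fin (m + 3) → R}
    (hx : ∀ k : Fin (m + 3), (k : ℕ) < m + 2 → (x ᵥ* (cycleGraph (m + 3)).lapMatrix R) k = 0)
    (i : Fin (m + 3)) :
    x i = x 0 + (i : ℕ) * (x 0 - x (-1)) := by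
  have h₀ := hx 0 (by simp)
  have hrec : ∀ j, j + 2 < m + 3 →
      x ((j + 2 : ℕ) : Fin (m + 3)) - 2 * x ((j + 1 : ℕ) : Fin (m + 3)) + x (j : Fin (m + 3))
        = 0 := by
    intro j hj
    have h := hx (j + 1 : ℕ) (by rw [Fin.val_natCast, Nat.mod_eq_of_lt (by omega)]; omega)
    rw [vecMul_lapMatrix_cycleGraph_apply] at h
    push_cast at h ⊢
    rw [add_sub_cancel_right, add_assoc, one_add_one_eq_two] at h
    linear_combination -h
  have hprog := eq_add_mul_of_second_difference_eq_zero (f := fun j : ℕ => x j) hrec i i.isLt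
  rw [vecMul_lapMatrix_cycleGraph_apply, zero_sub, zero_add] at h₀
  simp only [Fin.cast_val_eq_self, Nat.cast_zero, Nat.cast_one] at hprog
  rw [hprog]
  congr 2
  linear_combination -h₀

theorem vecMul_lapMatrix_cycleGraph_natCast_val :
    (fun i : Fin (m + 3) => ((i : ℕ) : ZMod (m + 3))) ᵥ*
      (cycleGraph (m + 3)).lapMatrix (ZMod (m + 3)) = 0 := by
  ext k
  have hsucc : ∀ j : Fin (m + 3), (((j + 1 : Fin (m + 3)) : ℕ) : ZMod (m + 3)) = (j : ℕ) + 1 := by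
    intro j
    rw [Fin.val_add, ZMod.natCast_mod, Fin.val_one, Nat.cast_add, Nat.cast_one]
  have hpred := hsucc (k - 1)
  rw [sub_add_cancel] at hpred
  rw [vecMul_lapMatrix_cycleGraph_apply, Pi.zero_apply, hsucc]
  linear_combination hpred

end CycleGraph

/-- For odd `n ≥ 3` and the matrix `[L_B | 1]` of the cycle `C_n`, the left
kernel over `ℤ/nℤ` is spanned by `(1,1,…,1)` and `(0,1,2,…,n-1)`. -/
theorem odd_cycle_left_kernel_mod_n {n : ℕ} (hn : 3 ≤ n) (hodd : Odd n)
    (L : Matrix (Fin n) (Fin n) ℤ)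
    (hL : ∀ a b : Fin n, L a b =
      if a = b then 2
      else if b = a + ⟨1, by omega⟩ ∨ a = b + ⟨1, by omega⟩ then -1 else 0)
    (A : Matrix (Fin n) (Fin (n - 1)) ℤ)
    (hA : ∀ i j, A i j = if (i : ℕ) ≤ (j : ℕ) then 1 else 0)
    (M : Matrix (Fin n) (Fin n) ℤ)
    (hM : ∀ i (j : Fin n), M i j =
      if h : (j : ℕ) < n - 1 then (L * A) i ⟨j, h⟩ else 1) :
    {x : Fin n → ZMod n |
        Matrix.vecMul x (M.map (Int.cast : ℤ → ZMod n)) = 0} =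
      ↑(Submodule.span (ZMod n)
        {(fun _ => 1 : Fin n → ZMod n),
         (fun i : Fin n => ((i : ℕ) : ZMod n))}) := by
  obtain ⟨m, rfl⟩ : ∃ m, n = m + 3 := ⟨n - 3, by omega⟩
  have hL' : L.map (Int.cast : ℤ → ZMod (m + 3)) = (cycleGraph (m + 3)).lapMatrix _ := by
    ext a b
    rw [map_apply, hL, lapMatrix_cycleGraph_apply, Fin.mk_one]
    split_ifs <;> simp
  have hA' : ∀ i j, A.map (Int.cast : ℤ → ZMod (m + 3)) i j =
      if (i : ℕ) ≤ (j : ℕ) then 1 else 0 := by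
    intro i j
    rw [map_apply, hA]
    split_ifs <;> simp
  have hM' : ∀ i (j : Fin (m + 3)), M.map (Int.cast : ℤ → ZMod (m + 3)) i j =
      if h : (j : ℕ) < m + 3 - 1 then
        (L.map (Int.cast : ℤ → ZMod (m + 3)) * A.map (Int.cast : ℤ → ZMod (m + 3))) i ⟨j, h⟩
      else 1 := by
    intro i j
    rw [map_apply, hM]
    split_ifs <;> simp [Matrix.mul_apply]
  ext x
  rw [Set.mem_ofPred_eq, vecMul_eq_zero_iff_of_mul_append_one hA' hM', hL', SetLike.mem_coe,
    Submodule.mem_span_pair]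
  constructor
  · rintro ⟨hx, -⟩
    refine ⟨x 0, x 0 - x (-1), funext fun i => ?_⟩
    rw [eq_add_mul_of_vecMul_lapMatrix_cycleGraph_eq_zero hx i]
    simp [mul_comm]
  · rintro ⟨a, b, rfl⟩
    refine ⟨fun k _ => ?_, ?_⟩
    · rw [add_vecMul, smul_vecMul, smul_vecMul, vecMul_lapMatrix_cycleGraph_natCast_val,
        vecMul_lapMatrix, lapMatrix_mulVec_const_eq_zero]
      simp
    · simp [sum_add_distrib, ← mul_sum, sum_natCast_val_fin_eq_zero_of_odd hodd]
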